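/- Let n ≥ 2, let κ = (κ_1, …, κ_n) ∈ ℝ^n have all entries positive, let 1 ≤ l < n be an integer and let 0 < ε < 1. Then for every vector v = (v_1, …, v_n) ∈ ℝ^n one has: (2−ε) · (Σ_p σ_{n-1}(κ|p) v_p)² / σ_n(κ) − Σ_{p≠q} σ_{n-2}(κ|pq) v_p v_q ≥ (1 + (1−ε)/((n−1)(2−ε))) · σ_n(κ) · (Σ_p σ_{l-1}(κ|p) v_p)² / σ_l(κ)² − (σ_n(κ)/σ_l(κ)) · Σ_{p≠q} σ_{l-2}(κ|pq) v_p v_q. -/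

import Mathlib

/-!
Write `v_p = κ_p w_p`. Expanding `σ_k` along one or two deleted variables turns
`∑_p σ_{k-1}(κ|p) v_p` and `∑_{p≠q} σ_{k-2}(κ|pq) v_p v_q` into expressions in `σ_k`,
`g_p = σ_k(κ|p)` and `h_pq = σ_k(κ|pq)`; for `k = n` the latter two vanish.
For `k = l` and `m = n - l`, the row sums of `h` are `(m - 1) g_p` and `∑_p g_p = m σ_l`,
while `σ_l h_pq ≤ g_p g_q` follows from `σ_{k+1} σ_{k-1} ≤ σ_k²`. Hence the numbers
`g_p g_q - σ_l h_pq` are the weights of a graph Laplacian, whose quadratic form is nonnegative;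
together with Cauchy–Schwarz this gives
`(1 + 1/m) (∑ g_p w_p)² ≤ σ_l (2 ∑ g_p w_p² + ∑_{p≠q} h_pq w_p w_q)`.
What remains is an elementary inequality between quadratic forms in `σ_l ∑ w_p` and `∑ g_p w_p`.
-/

open Finset

/-- The `k`-th elementary symmetric polynomial of the values of `κ` on the index set `s`,
with the convention that it vanishes for negative `k` (and `σ₀ = 1`). -/
noncomputable def esymmSet {n : ℕ} (s : Finset (Fin n)) (k : ℤ) (κ : Fin n → ℝ) : ℝ :=
  if k < 0 then 0 else ∑ t ∈ s.powersetCard k.toNat, ∏ j ∈ t, κ j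

section esymmSet

variable {n : ℕ} {κ : Fin n → ℝ} {s : Finset (Fin n)} {k : ℤ}

lemma esymmSet_of_neg (hk : k < 0) : esymmSet s k κ = 0 := by
  simp [esymmSet, hk]

lemma esymmSet_natCast (k : ℕ) :
    esymmSet s k κ = ∑ t ∈ s.powersetCard k, ∏ j ∈ t, κ j := by
  simp [esymmSet]

lemma esymmSet_nonneg (hκ : ∀ i, 0 ≤ κ i) : 0 ≤ esymmSet s k κ := by
  unfold esymmSet
  split
  · exact le_rfl
  · exact sum_nonneg fun t _ => prod_nonneg fun j _ => hκ j

lemma esymmSet_pos (hκ : ∀ i, 0 < κ i) (hk0 : 0 ≤ k) (hk : k ≤ s.card) :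
    0 < esymmSet s k κ := by
  rw [esymmSet, if_neg (by omega)]
  refine sum_pos (fun t _ => prod_pos fun j _ => hκ j) ?_
  rw [powersetCard_nonempty]
  omega

lemma esymmSet_of_card_lt (hk : s.card < k) : esymmSet s k κ = 0 := by
  rw [esymmSet, if_neg (by omega), powersetCard_eq_empty.2 (by omega), sum_empty]

lemma esymmSet_insert {x : Fin n} (hx : x ∉ s) (k : ℤ) :
    esymmSet (insert x s) k κ = esymmSet s k κ + κ x * esymmSet s (k - 1) κ := by
  rcases lt_or_ge k 0 with hk | hk
  · rw [esymmSet_of_neg hk, esymmSet_of_neg hk, esymmSet_of_neg (by omega), mul_zero, add_zero]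
  obtain ⟨_ | m, rfl⟩ := Int.eq_ofNat_of_zero_le hk
  · simp [esymmSet]
  · rw [Nat.cast_succ, add_sub_cancel_right, ← Nat.cast_succ, esymmSet_natCast, esymmSet_natCast,
      esymmSet_natCast, powersetCard_succ_insert hx, sum_union, sum_image, mul_sum]
    · refine congrArg _ (sum_congr rfl fun t ht => ?_)
      rw [prod_insert fun hxt => hx ((mem_powersetCard.1 ht).1 hxt)]
    · intro t ht u hu htu
      have hxt : x ∉ t := fun h => hx ((mem_powersetCard.1 ht).1 h)
      have hxu : x ∉ u := fun h => hx ((mem_powersetCard.1 hu).1 h)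
      rw [← erase_insert hxt, ← erase_insert hxu, htu]
    · refine disjoint_left.2 fun t ht ht' => ?_
      obtain ⟨u, -, rfl⟩ := mem_image.1 ht'
      exact hx ((mem_powersetCard.1 ht).1 (mem_insert_self x u))

lemma mul_esymmSet_erase {x : Fin n} (hx : x ∈ s) (k : ℤ) :
    κ x * esymmSet (s.erase x) (k - 1) κ = esymmSet s k κ - esymmSet (s.erase x) k κ := by
  rw [← insert_erase hx, esymmSet_insert (notMem_erase x s), erase_insert (notMem_erase x s)]
  ring

lemma mul_mul_esymmSet_erase_erase {p q : Fin n} (hp : p ∈ s) (hq : q ∈ s) (hpq : p ≠ q)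
    (k : ℤ) :
    κ p * κ q * esymmSet ((s.erase p).erase q) (k - 2) κ =
      esymmSet s k κ - esymmSet (s.erase p) k κ - esymmSet (s.erase q) k κ
        + esymmSet ((s.erase p).erase q) k κ := by
  have hq' : q ∈ s.erase p := mem_erase.2 ⟨hpq.symm, hq⟩
  have h1 := mul_esymmSet_erase (κ := κ) hq' (k - 1)
  rw [sub_sub, one_add_one_eq_two] at h1
  rw [mul_assoc, h1, mul_sub, mul_esymmSet_erase hp, erase_right_comm,
    mul_esymmSet_erase (mem_erase.2 ⟨hpq, hp⟩), erase_right_comm]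
  ring

lemma sum_esymmSet_erase (s : Finset (Fin n)) (k : ℕ) :
    ∑ p ∈ s, esymmSet (s.erase p) k κ = ((s.card : ℝ) - k) * esymmSet s k κ := by
  simp_rw [esymmSet_natCast]
  rw [sum_comm' (s' := fun t => s \ t) (t' := s.powersetCard k) fun p t => by
    simp only [mem_powersetCard, subset_erase, mem_sdiff]
    tauto]
  rw [mul_sum]
  refine sum_congr rfl fun t ht => ?_
  rw [mem_powersetCard] at ht
  rw [sum_const, nsmul_eq_mul, card_sdiff_of_subset ht.1, ht.2,
    Nat.cast_sub (ht.2 ▸ card_le_card ht.1)]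

end esymmSet

section esymmSetIneq

variable {n : ℕ} {κ : Fin n → ℝ}

lemma esymmSet_add_one_mul_sub_one_le (hκ : ∀ i, 0 ≤ κ i) (s : Finset (Fin n)) {i j : ℤ}
    (hji : j ≤ i) :
    esymmSet s (i + 1) κ * esymmSet s (j - 1) κ ≤ esymmSet s i κ * esymmSet s j κ := by
  induction s using Finset.induction_on generalizing i j with
  | empty =>
    rcases le_or_gt j 0 with hj | hj
    · rw [esymmSet_of_neg (k := j - 1) (by omega), mul_zero]
      exact mul_nonneg (esymmSet_nonneg hκ) (esymmSet_nonneg hκ)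
    · rw [esymmSet_of_card_lt (k := i + 1) (by simp; omega), zero_mul]
      exact mul_nonneg (esymmSet_nonneg hκ) (esymmSet_nonneg hκ)
  | insert x s hx ih =>
    rcases le_or_gt j 0 with hj | hj
    · rw [esymmSet_of_neg (k := j - 1) (by omega), mul_zero]
      exact mul_nonneg (esymmSet_nonneg hκ) (esymmSet_nonneg hκ)
    have outer : esymmSet s (i + 1) κ * esymmSet s (j - 1 - 1) κ ≤
        esymmSet s (i - 1) κ * esymmSet s j κ := by
      refine (ih (by omega)).trans ?_
      rcases hji.eq_or_lt with rfl | hji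
      · rw [mul_comm]
      · simpa only [sub_add_cancel] using ih (i := i - 1) (j := j) (by omega)
    have inner := ih (i := i - 1) (j := j - 1) (by omega)
    rw [sub_add_cancel] at inner
    simp only [esymmSet_insert hx, add_sub_cancel_right]
    nlinarith [ih hji, mul_le_mul_of_nonneg_left outer (hκ x),
      mul_le_mul_of_nonneg_left inner (mul_self_nonneg (κ x))]

lemma esymmSet_mul_esymmSet_erase_erase_le (hκ : ∀ i, 0 ≤ κ i) {s : Finset (Fin n)}
    {p q : Fin n} (hp : p ∈ s) (hq : q ∈ s) (hpq : p ≠ q) (k : ℤ) :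
    esymmSet s k κ * esymmSet ((s.erase p).erase q) k κ ≤
      esymmSet (s.erase p) k κ * esymmSet (s.erase q) k κ := by
  have hs := mul_mul_esymmSet_erase_erase (κ := κ) hp hq hpq k
  have hsp := mul_esymmSet_erase (κ := κ) (mem_erase.2 ⟨hpq.symm, hq⟩) k
  have hsq := mul_esymmSet_erase (κ := κ) (mem_erase.2 ⟨hpq, hp⟩) k
  rw [erase_right_comm] at hsq
  set t := (s.erase p).erase q
  have newton := esymmSet_add_one_mul_sub_one_le hκ t (le_refl (k - 1))
  rw [sub_add_cancel, sub_sub, one_add_one_eq_two] at newton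
  have defect : esymmSet (s.erase p) k κ * esymmSet (s.erase q) k κ
      - esymmSet s k κ * esymmSet t k κ
      = κ p * κ q * (esymmSet t (k - 1) κ * esymmSet t (k - 1) κ
        - esymmSet t k κ * esymmSet t (k - 2) κ) := by
    linear_combination esymmSet t k κ * hs - (esymmSet (s.erase q) k κ - esymmSet t k κ) * hsp
      - (κ q * esymmSet t (k - 1) κ) * hsq
  nlinarith [mul_nonneg (mul_nonneg (hκ p) (hκ q)) (sub_nonneg.2 newton)]

end esymmSetIneq

section QuadraticForm

variable {ι : Type*} [Fintype ι] [DecidableEq ι]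

lemma sum_sum_erase_mul (a b : ι → ℝ) :
    ∑ p, ∑ q ∈ univ.erase p, a p * b q = (∑ p, a p) * (∑ q, b q) - ∑ p, a p * b p := by
  simp only [sum_erase_eq_sub (mem_univ _), ← mul_sum, sum_sub_distrib, sum_mul]

lemma sum_sum_erase_swap (f : ι → ι → ℝ) :
    ∑ p, ∑ q ∈ univ.erase p, f p q = ∑ q, ∑ p ∈ univ.erase q, f p q :=
  sum_comm' fun p q => by simp [ne_comm]

lemma sum_sum_erase_mul_mul_le (c : ι → ι → ℝ) (hsymm : ∀ p q, c p q = c q p)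
    (hc : ∀ p q, p ≠ q → 0 ≤ c p q) (w : ι → ℝ) :
    ∑ p, ∑ q ∈ univ.erase p, c p q * w p * w q ≤
      ∑ p, (∑ q ∈ univ.erase p, c p q) * w p ^ 2 := by
  have hsq : 0 ≤ ∑ p, ∑ q ∈ univ.erase p, c p q * (w p - w q) ^ 2 :=
    sum_nonneg fun p _ => sum_nonneg fun q hq =>
      mul_nonneg (hc p q (mem_erase.1 hq).1.symm) (sq_nonneg _)
  have hswap : ∑ p, ∑ q ∈ univ.erase p, c p q * w q ^ 2 =
      ∑ p, (∑ q ∈ univ.erase p, c p q) * w p ^ 2 := by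
    rw [sum_sum_erase_swap]
    simp only [sum_mul, hsymm]
  have hexpand : ∑ p, ∑ q ∈ univ.erase p, c p q * (w p - w q) ^ 2 =
      ∑ p, ∑ q ∈ univ.erase p, c p q * w p ^ 2
        + ∑ p, ∑ q ∈ univ.erase p, c p q * w q ^ 2
        - 2 * ∑ p, ∑ q ∈ univ.erase p, c p q * w p * w q := by
    simp only [mul_sum, ← sum_add_distrib, ← sum_sub_distrib]
    exact sum_congr rfl fun p _ => sum_congr rfl fun q _ => by ring
  simp only [sum_mul] at hswap ⊢
  linarith

lemma one_add_inv_mul_sq_sum_le {L m : ℝ} (hm : 0 < m) {g : ι → ℝ} {h : ι → ι → ℝ}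
    (hg : ∀ p, 0 ≤ g p) (hsymm : ∀ p q, h p q = h q p)
    (hgh : ∀ p q, p ≠ q → L * h p q ≤ g p * g q)
    (hrow : ∀ p, ∑ q ∈ univ.erase p, h p q = (m - 1) * g p) (hsum : ∑ p, g p = m * L)
    (w : ι → ℝ) :
    (1 + m⁻¹) * (∑ p, g p * w p) ^ 2 ≤
      L * (2 * ∑ p, g p * w p ^ 2 + ∑ p, ∑ q ∈ univ.erase p, h p q * w p * w q) := by
  have cauchySchwarz : (∑ p, g p * w p) ^ 2 ≤ m * (L * ∑ p, g p * w p ^ 2) := by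
    rw [← mul_assoc, ← hsum]
    exact sum_sq_le_sum_mul_sum_of_sq_le_mul _ (fun p _ => hg p)
      (fun p _ => mul_nonneg (hg p) (sq_nonneg _)) fun p _ => le_of_eq (by ring)
  have laplacian := sum_sum_erase_mul_mul_le (fun p q => g p * g q - L * h p q)
    (fun p q => by rw [hsymm, mul_comm (g p)]) (fun p q hpq => sub_nonneg.2 (hgh p q hpq)) w
  have hrow' : ∀ p, ∑ q ∈ univ.erase p, (g p * g q - L * h p q) = g p * (L - g p) := by
    intro p
    rw [sum_sub_distrib, ← mul_sum, ← mul_sum, hrow, sum_erase_eq_sub (mem_univ p), hsum]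
    ring
  have hcross : ∑ p, ∑ q ∈ univ.erase p, g p * g q * w p * w q =
      (∑ p, g p * w p) ^ 2 - ∑ p, (g p * w p) ^ 2 := by
    simp only [sq, ← sum_sum_erase_mul]
    exact sum_congr rfl fun p _ => sum_congr rfl fun q _ => by ring
  have hL : ∑ p, ∑ q ∈ univ.erase p, L * h p q * w p * w q =
      L * ∑ p, ∑ q ∈ univ.erase p, h p q * w p * w q := by
    simp only [mul_sum]
    exact sum_congr rfl fun p _ => sum_congr rfl fun q _ => by ring
  have hdiag : ∑ p, g p * (L - g p) * w p ^ 2 =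
      L * ∑ p, g p * w p ^ 2 - ∑ p, (g p * w p) ^ 2 := by
    rw [mul_sum, ← sum_sub_distrib]
    exact sum_congr rfl fun p _ => by ring
  simp only [hrow', sub_mul, sum_sub_distrib, hcross, hL, hdiag] at laplacian
  have := (inv_mul_le_iff₀ hm).2 cauchySchwarz
  linarith

end QuadraticForm

lemma one_add_div_mul_sq_sub_le {ν m ε : ℝ} (hm : 1 ≤ m) (hmν : m ≤ ν - 1) (hε : ε ≤ 1)
    (X A : ℝ) :
    (1 + (1 - ε) / ((ν - 1) * (2 - ε))) * (X - A) ^ 2 ≤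
      (2 - ε) * X ^ 2 - 2 * X * A + (1 + m⁻¹) * A ^ 2 := by
  have hν : 0 < ν - 1 := by linarith
  have hε2 : 0 < 2 - ε := by linarith
  have hd : 0 < (ν - 1) * (2 - ε) := mul_pos hν hε2
  have hinv : (2 - ε) / ((ν - 1) * (2 - ε)) ≤ m⁻¹ := by
    rw [mul_comm, ← div_div, div_self hε2.ne', one_div]
    exact inv_anti₀ (by linarith) hmν
  have hsos : 0 ≤ ((1 - ε) * X + A) ^ 2 + (1 - ε) * (ν - 2) * (2 - ε) * X ^ 2 := by
    have : 0 ≤ (1 - ε) * (ν - 2) * (2 - ε) := by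
      apply mul_nonneg (mul_nonneg _ _) <;> linarith
    positivity
  have hdiff : (2 - ε) * X ^ 2 - 2 * X * A + (1 + m⁻¹) * A ^ 2
      - (1 + (1 - ε) / ((ν - 1) * (2 - ε))) * (X - A) ^ 2
      = (m⁻¹ - (2 - ε) / ((ν - 1) * (2 - ε))) * A ^ 2
        + (((1 - ε) * X + A) ^ 2 + (1 - ε) * (ν - 2) * (2 - ε) * X ^ 2)
          / ((ν - 1) * (2 - ε)) := by
    have : m ≠ 0 := by positivity
    field_simp
    ring
  have := mul_nonneg (sub_nonneg.2 hinv) (sq_nonneg A)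
  have := div_nonneg hsos hd.le
  linarith

section Reduction

variable {n : ℕ} (κ w : Fin n → ℝ) (k : ℤ)

lemma sum_esymmSet_erase_mul_mul :
    ∑ p, esymmSet (univ.erase p) (k - 1) κ * (κ p * w p) =
      esymmSet univ k κ * ∑ p, w p - ∑ p, esymmSet (univ.erase p) k κ * w p := by
  rw [mul_sum, ← sum_sub_distrib]
  refine sum_congr rfl fun p _ => ?_
  rw [mul_left_comm, ← mul_assoc, mul_esymmSet_erase (mem_univ p)]
  ring

lemma sum_sum_esymmSet_erase_erase_mul_mul :
    ∑ p, ∑ q ∈ univ.erase p,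
        esymmSet ((univ.erase p).erase q) (k - 2) κ * (κ p * w p) * (κ q * w q) =
      esymmSet univ k κ * ((∑ p, w p) ^ 2 - ∑ p, w p ^ 2)
        - 2 * ((∑ p, esymmSet (univ.erase p) k κ * w p) * ∑ p, w p
          - ∑ p, esymmSet (univ.erase p) k κ * w p ^ 2)
        + ∑ p, ∑ q ∈ univ.erase p, esymmSet ((univ.erase p).erase q) k κ * w p * w q := by
  have hterm : ∀ p, ∀ q ∈ univ.erase p,
      esymmSet ((univ.erase p).erase q) (k - 2) κ * (κ p * w p) * (κ q * w q) =
        esymmSet univ k κ * w p * w q - esymmSet (univ.erase p) k κ * w p * w q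
          - w p * (esymmSet (univ.erase q) k κ * w q)
          + esymmSet ((univ.erase p).erase q) k κ * w p * w q := fun p q hq => by
    have hpq := mul_mul_esymmSet_erase_erase (κ := κ) (mem_univ p) (mem_univ q)
      (mem_erase.1 hq).1.symm k
    linear_combination w p * w q * hpq
  rw [sum_congr rfl fun p _ => sum_congr rfl (hterm p)]
  simp only [sum_add_distrib, sum_sub_distrib,
    sum_sum_erase_mul (fun p => esymmSet univ k κ * w p) w,
    sum_sum_erase_mul (fun p => esymmSet (univ.erase p) k κ * w p) w,
    sum_sum_erase_mul w (fun q => esymmSet (univ.erase q) k κ * w q)]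
  simp only [mul_assoc, mul_left_comm (w _) (esymmSet _ _ _), ← sq, ← mul_sum]
  ring

end Reduction

lemma one_add_inv_mul_sq_sum_esymmSet_le {n : ℕ} {κ : Fin n → ℝ} (hκ : ∀ i, 0 ≤ κ i) {l : ℕ}
    (hl : l < n) (w : Fin n → ℝ) :
    (1 + ((n : ℝ) - l)⁻¹) * (∑ p, esymmSet (univ.erase p) l κ * w p) ^ 2 ≤
      esymmSet univ l κ * (2 * ∑ p, esymmSet (univ.erase p) l κ * w p ^ 2
        + ∑ p, ∑ q ∈ univ.erase p, esymmSet ((univ.erase p).erase q) l κ * w p * w q) := by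
  refine one_add_inv_mul_sq_sum_le (sub_pos.2 (by exact_mod_cast hl))
    (fun p => esymmSet_nonneg hκ) (fun p q => by rw [erase_right_comm])
    (fun p q hpq => esymmSet_mul_esymmSet_erase_erase_le hκ (mem_univ p) (mem_univ q) hpq l)
    (fun p => ?_) ?_ w
  · rw [sum_esymmSet_erase, card_erase_of_mem (mem_univ p), card_univ, Fintype.card_fin,
      Nat.cast_sub (by omega), Nat.cast_one]
    ring
  · rw [sum_esymmSet_erase, card_univ, Fintype.card_fin]

theorem esymm_key_ineq_general (n : ℕ)
    (κ : Fin n → ℝ) (hκ : ∀ i, 0 < κ i)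
    (l : ℕ) (hl1 : 1 ≤ l) (hl2 : l < n) (ε : ℝ) (hε2 : ε < 1)
    (v : Fin n → ℝ) :
    (2 - ε) * (∑ p : Fin n, esymmSet (univ.erase p) ((n : ℤ) - 1) κ * v p) ^ 2 /
        esymmSet univ (n : ℤ) κ
      - ∑ p : Fin n, ∑ q ∈ univ.erase p,
          esymmSet ((univ.erase p).erase q) ((n : ℤ) - 2) κ * v p * v q
    ≥ (1 + (1 - ε) / (((n : ℝ) - 1) * (2 - ε))) * esymmSet univ (n : ℤ) κ *
          (∑ p : Fin n, esymmSet (univ.erase p) ((l : ℤ) - 1) κ * v p) ^ 2 /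
            (esymmSet univ (l : ℤ) κ) ^ 2
      - esymmSet univ (n : ℤ) κ / esymmSet univ (l : ℤ) κ *
          ∑ p : Fin n, ∑ q ∈ univ.erase p,
            esymmSet ((univ.erase p).erase q) ((l : ℤ) - 2) κ * v p * v q := by
  obtain ⟨w, rfl⟩ : ∃ w : Fin n → ℝ, v = fun p => κ p * w p :=
    ⟨fun p => v p / κ p, funext fun p => (mul_div_cancel₀ _ (hκ p).ne').symm⟩
  have hn1 : ∀ p : Fin n, esymmSet (univ.erase p) n κ = 0 := fun p =>
    esymmSet_of_card_lt (by simp; omega)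
  have hn2 : ∀ p q : Fin n, esymmSet ((univ.erase p).erase q) n κ = 0 := fun p q =>
    esymmSet_of_card_lt (by grw [card_erase_le]; simp; omega)
  simp only [sum_esymmSet_erase_mul_mul, sum_sum_esymmSet_erase_erase_mul_mul, hn1, hn2,
    zero_mul, sum_const_zero, sub_zero, mul_zero, add_zero]
  have hl1' : (1 : ℝ) ≤ l := by exact_mod_cast hl1
  have hl2' : (l : ℝ) + 1 ≤ n := by exact_mod_cast hl2
  have core := one_add_inv_mul_sq_sum_esymmSet_le (fun i => (hκ i).le) hl2 w
  have scalar := one_add_div_mul_sq_sub_le (ν := n) (m := n - l) (ε := ε)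
    (by linarith) (by linarith) hε2.le (esymmSet univ l κ * ∑ p, w p)
    (∑ p, esymmSet (univ.erase p) l κ * w p)
  have hP : 0 < esymmSet univ n κ := esymmSet_pos hκ (by omega) (by simp)
  have hL : 0 < esymmSet univ l κ := esymmSet_pos hκ (by omega) (by simp; omega)
  set c := 1 + (1 - ε) / (((n : ℝ) - 1) * (2 - ε))
  set P := esymmSet univ n κ
  set L := esymmSet univ l κ
  set A := ∑ p, esymmSet (univ.erase p) l κ * w p
  set B := ∑ p, esymmSet (univ.erase p) l κ * w p ^ 2
  set H := ∑ p, ∑ q ∈ univ.erase p, esymmSet ((univ.erase p).erase q) l κ * w p * w q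
  set W := ∑ p, w p
  set W2 := ∑ p, w p ^ 2
  calc c * P * (L * W - A) ^ 2 / L ^ 2 - P / L * (L * (W ^ 2 - W2) - 2 * (A * W - B) + H)
      = P / L ^ 2 * (c * (L * W - A) ^ 2 - L * (L * (W ^ 2 - W2) - 2 * (A * W - B) + H)) := by
        field_simp
    _ ≤ P / L ^ 2 * ((2 - ε) * (L * W) ^ 2 - L ^ 2 * (W ^ 2 - W2)) := by
        refine mul_le_mul_of_nonneg_left ?_ (by positivity)
        linarith
    _ = (2 - ε) * (P * W) ^ 2 / P - P * (W ^ 2 - W2) := by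
        field_simp

/-- key inequality (taking `δ = 1/(2−ε)` in the concavity inequality). -/
theorem esymm_key_ineq (n : ℕ) (hn : 2 ≤ n)
    (κ : Fin n → ℝ) (hκ : ∀ i, 0 < κ i)
    (l : ℕ) (hl1 : 1 ≤ l) (hl2 : l < n) (ε : ℝ) (hε1 : 0 < ε) (hε2 : ε < 1)
    (v : Fin n → ℝ) :
    (2 - ε) * (∑ p : Fin n, esymmSet (univ.erase p) ((n : ℤ) - 1) κ * v p) ^ 2 /
        esymmSet univ (n : ℤ) κ
      - ∑ p : Fin n, ∑ q ∈ univ.erase p,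
          esymmSet ((univ.erase p).erase q) ((n : ℤ) - 2) κ * v p * v q
    ≥ (1 + (1 - ε) / (((n : ℝ) - 1) * (2 - ε))) * esymmSet univ (n : ℤ) κ *
          (∑ p : Fin n, esymmSet (univ.erase p) ((l : ℤ) - 1) κ * v p) ^ 2 /
            (esymmSet univ (l : ℤ) κ) ^ 2
      - esymmSet univ (n : ℤ) κ / esymmSet univ (l : ℤ) κ *
          ∑ p : Fin n, ∑ q ∈ univ.erase p,
            esymmSet ((univ.erase p).erase q) ((l : ℤ) - 2) κ * v p * v q :=
  esymm_key_ineq_general n κ hκ l hl1 hl2 ε hε2 v
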